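/- arXiv:1503.02792 — 2 statements merged into one kernel-verified Lean document; each statement's English description precedes it below -/
import Mathlib

section
/- Let X be a finite set. Consider the graph whose vertices are the partitions of X, with an edge between two partitions if and only if one is obtained from the other by gluing two of its blocks into one. This graph is connected, and for any two partitions p and p' of X the graph distance between p and p' equals nc(p) + nc(p') − 2·nc(p∨p'); equivalently, the geodesic distance d(p,p') (half the graph distance) equals (nc(p)+nc(p'))/2 − nc(p∨p'). -/
/-!
Gluing two distinct blocks lowers `nc` by one, and any `p ≤ q` is reached from `p` by
`nc p - nc q` gluings; going up from `p` to `p ⊔ p'` and back down to `p'` gives a path of length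
`nc p + nc p' - 2 nc (p ⊔ p')`. Conversely, a gluing `a → b` lowers `nc (· ⊔ c)` by zero or one,
so `nc a - 2 nc (a ⊔ p')` changes by exactly one along each edge. It equals `-nc p'` at `p'`,
which bounds the length of every path from `p` to `p'` from below.
-/

open Sum
open scoped Classical

noncomputable section

namespace PartitionPaper

variable {X : Type*}

/-- The number of blocks of a partition of `X`, encoded as a setoid on `X`. -/
def nc (p : Setoid X) : ℕ := Nat.card (Quotient p)

/-- The geodesic distance `d(p,p') = (nc p + nc p')/2 - nc (p ⊔ p')`. -/
def pdist (p q : Setoid X) : ℚ :=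
  ((nc p : ℚ) + (nc q : ℚ)) / 2 - (nc (p ⊔ q) : ℚ)

/-- Geodesic order with base partition `b` : `p' ≤_b p`. -/
def geoLE (b p' p : Setoid X) : Prop := pdist b p' + pdist p' p = pdist b p

/-- Coarser-compatible order `p' ⊣_b p` : `p'` coarser than `p` and
`nc (p' ⊔ b) = nc (p ⊔ b)`.  (In the setoid lattice, `p ≤ p'` means `p` is finer.) -/
def coarserComp (b p' p : Setoid X) : Prop :=
  p ≤ p' ∧ nc (p' ⊔ b) = nc (p ⊔ b)

/-- Finer-compatible order `p' ⊐_b p` : `p'` finer than `p` and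
`nc p' - nc (p' ⊔ b) = nc p - nc (p ⊔ b)`. -/
def finerComp (b p' p : Setoid X) : Prop :=
  p' ≤ p ∧ (nc p' : ℤ) - (nc (p' ⊔ b) : ℤ) = (nc p : ℤ) - (nc (p ⊔ b) : ℤ)

/-- `p'` is obtained from `p` by gluing two blocks of `p` into one. -/
def IsGluing (p p' : Setoid X) : Prop := p ≤ p' ∧ nc p' + 1 = nc p

/-- The Cayley graph on partitions of `X`: an edge iff one partition is obtained
from the other by gluing two of its blocks into one. -/
def glueGraph (X : Type*) : SimpleGraph (Setoid X) where
  Adj p q := IsGluing p q ∨ IsGluing q p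
  symm := ⟨fun _ _ h => h.elim Or.inr Or.inl⟩
  loopless := by
    constructor
    intro p h
    rcases h with ⟨-, h⟩ | ⟨-, h⟩ <;> omega

/-- The segment `[p₁, p₂]` for the geodesic distance. -/
def seg (p₁ p₂ : Setoid X) : Set (Setoid X) :=
  {p | pdist p₁ p + pdist p p₂ = pdist p₁ p₂}

/-- The defect of `p'` from being on `[b, p]`. -/
def df (b p' p : Setoid X) : ℚ := pdist b p' + pdist p' p - pdist b p

/-- Admissible one-step splits: `p'` is obtained by cutting a (pivotal) block of `p`
into two blocks in such a way that the join with `b` gains one block. -/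
def Delta (b p : Setoid X) : Set (Setoid X) :=
  {p' | p' ≤ p ∧ nc p' = nc p + 1 ∧ nc (p' ⊔ b) = nc (p ⊔ b) + 1}

/-- The admissible splits `Sp_b(p) = ⋃ₘ Δ_b^m(p)`. -/
def Sp (b p : Setoid X) : Set (Setoid X) :=
  {p' | Relation.ReflTransGen (fun u v => v ∈ Delta b u) p p'}

/-- The admissible gluings `Gl_b(p)`: partitions obtained by gluing blocks of `p`
without altering the number of blocks of the join with `b`. -/
def Gl (b p : Setoid X) : Set (Setoid X) :=
  {p' | p ≤ p' ∧ nc (p' ⊔ b) = nc (p ⊔ b)}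

/-- `p'` is directly smaller than `p` for the relation `r`. -/
def DirectlySmaller (r : Setoid X → Setoid X → Prop) (p' p : Setoid X) : Prop :=
  r p' p ∧ p' ≠ p ∧ ¬ ∃ p'', p'' ≠ p ∧ p'' ≠ p' ∧ r p' p'' ∧ r p'' p

/-- The block of the partition `p` corresponding to a class `c`. -/
def blockSet (p : Setoid X) (c : Quotient p) : Set X := {x | Quotient.mk p x = c}

/-- The number of blocks of `q` contained in the block `c` of `p`. -/
def numSubBlocks (q p : Setoid X) (c : Quotient p) : ℕ :=
  Nat.card {d : Quotient q // blockSet q d ⊆ blockSet p c}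

/-- The number of blocks of `p` containing exactly `i` blocks of `q`. -/
def rcount (q p : Setoid X) (i : ℕ) : ℕ :=
  Nat.card {c : Quotient p // numSubBlocks q p c = i}

/-- The Möbius function of the refinement order:
`μ_f(q,p) = (-1)^(nc q - nc p) ∏_i ((i-1)!)^(r_i)` for `q` finer than `p`. -/
def muf (q p : Setoid X) : ℤ :=
  (-1) ^ (nc q - nc p) *
    ∏ i ∈ Finset.range (nc q + 1), ((Nat.factorial (i - 1) : ℤ)) ^ (rcount q p i)

/-- `P_k`: partitions of `{1,…,k} ∪ {1',…,k'}`, the left summand being the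
unprimed (top) row and the right summand the primed (bottom) row. -/
abbrev Pk (k : ℕ) := Setoid (Fin k ⊕ Fin k)

/-- The identity partition `id_k = {{i, i'} : 1 ≤ i ≤ k}`. -/
def idk (k : ℕ) : Pk k := Setoid.ker (Sum.elim id id)

/-- The permutation partition associated with `σ`, with blocks `{i, σ(i)'}`. -/
def permPartition {k : ℕ} (σ : Equiv.Perm (Fin k)) : Pk k :=
  Setoid.ker (Sum.elim id σ.symm)

/-- `S_k`, the set of permutation partitions. -/
def Sk (k : ℕ) : Set (Pk k) := Set.range (permPartition (k := k))

/-- `B_k`, the set of Brauer partitions: all blocks have exactly two elements. -/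
def Bk (k : ℕ) : Set (Pk k) := {p | ∀ x, Nat.card {y | p x y} = 2}

/-- Embedding of the top/bottom rows of the upper diagram `q` into the
three-row diagram (top ⊕ (middle ⊕ bottom)). -/
def upMap (k : ℕ) : Fin k ⊕ Fin k → Fin k ⊕ (Fin k ⊕ Fin k) :=
  Sum.elim Sum.inl (fun i => Sum.inr (Sum.inl i))

/-- Embedding of the top/bottom rows of the lower diagram `p` into the
three-row diagram. -/
def downMap (k : ℕ) : Fin k ⊕ Fin k → Fin k ⊕ (Fin k ⊕ Fin k) :=
  Sum.elim (fun i => Sum.inr (Sum.inl i)) (fun i => Sum.inr (Sum.inr i))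

/-- The partition of the three-row diagram obtained by stacking a diagram of `q`
on top of a diagram of `p` (identifying the bottom row of `q` with the top row
of `p`): the equivalence relation generated by the copies of `q` and `p`. -/
def stackSetoid {k : ℕ} (p q : Pk k) : Setoid (Fin k ⊕ (Fin k ⊕ Fin k)) :=
  sInf {s | ∀ x y,
    ((∃ a b, upMap k a = x ∧ upMap k b = y ∧ q a b) ∨
     (∃ a b, downMap k a = x ∧ downMap k b = y ∧ p a b)) → s x y}

/-- The composition `p ∘ q` (a diagram of `q` stacked above a diagram of `p`),
obtained by restricting the stacked partition to the outer rows. -/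
def comp {k : ℕ} (p q : Pk k) : Pk k :=
  Setoid.comap (Sum.elim Sum.inl (fun i => Sum.inr (Sum.inr i))) (stackSetoid p q)

/-- `κ(p,q)`: the number of connected components of the stacked diagram entirely
contained in the middle row. -/
def kappaP {k : ℕ} (p q : Pk k) : ℕ :=
  Nat.card {c : Quotient (stackSetoid p q) //
    ∀ x, Quotient.mk (stackSetoid p q) x = c → ∃ i : Fin k, x = Sum.inr (Sum.inl i)}

/-- The transpose `ᵗp`, exchanging the two rows. -/
def transpose {k : ℕ} (p : Pk k) : Pk k := Setoid.comap Sum.swap p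

/-- The disjoint-union partition on a sum type. -/
def sumSetoid {α β : Type*} (p : Setoid α) (q : Setoid β) : Setoid (α ⊕ β) :=
  Setoid.ker (Sum.map (Quotient.mk p) (Quotient.mk q))

/-- Reindexing of the rows for the tensor product. -/
def reindex (k l : ℕ) :
    Fin (k + l) ⊕ Fin (k + l) → (Fin k ⊕ Fin k) ⊕ (Fin l ⊕ Fin l) :=
  Sum.elim
    (fun j => Sum.elim (fun a => Sum.inl (Sum.inl a)) (fun b => Sum.inr (Sum.inl b))
      (finSumFinEquiv.symm j))
    (fun j => Sum.elim (fun a => Sum.inl (Sum.inr a)) (fun b => Sum.inr (Sum.inr b))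
      (finSumFinEquiv.symm j))

/-- The tensor product `p ⊗ q ∈ P_{k+l}`: a diagram of `p` placed to the left of
a diagram of `q`. -/
def tensor {k l : ℕ} (p : Pk k) (q : Pk l) : Pk (k + l) :=
  Setoid.comap (reindex k l) (sumSetoid p q)

/-- The `≺`-defect `η(p,q)`. -/
def eta {k : ℕ} (p q : Pk k) : ℚ :=
  pdist (idk k) p + pdist (idk k) q - pdist (idk k) (comp p q)
    - ((k : ℚ) + (nc (comp p q) : ℚ) - (nc p : ℚ) - (nc q : ℚ)) / 2 - (kappaP p q : ℚ)

/-- The Kreweras complement of `p'` in `p`: the set of `p''` with `p = p' ∘ p''`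
realizing equality in the `≺`-defect inequality. -/
def Krew {k : ℕ} (p p' : Pk k) : Set (Pk k) :=
  {p'' | comp p' p'' = p ∧ eta p' p'' = 0}

/-- `p' ≺ p` : `p'` is an admissible prefix of `p`. -/
def prec {k : ℕ} (p' p : Pk k) : Prop :=
  ∃ p'', comp p' p'' = p ∧ eta p' p'' = 0

/-- The partition of `{1,…,k}` into the orbits (cycles) of the permutation `σ`. -/
def cycleSetoid {k : ℕ} (σ : Equiv.Perm (Fin k)) : Setoid (Fin k) :=
  ⟨σ.SameCycle,
    ⟨fun x => Equiv.Perm.SameCycle.refl σ x, fun h => h.symm, fun h₁ h₂ => h₁.trans h₂⟩⟩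

/-- A partition of `{1,…,k}` is non-crossing if there are no `a < b < c < d` with
`a, c` in one block and `b, d` in a different block. -/
def NonCrossing {k : ℕ} (π : Setoid (Fin k)) : Prop :=
  ¬ ∃ a b c d : Fin k, a < b ∧ b < c ∧ c < d ∧ π a c ∧ π b d ∧ ¬ π a b

/-- The map sending a permutation partition to the partition of `{1,…,k}` into
the orbits of the corresponding bijection (the blocks of `p ⊔ id_k` restricted
to the top row). -/
def orbitMap {k : ℕ} (p : Pk k) : Setoid (Fin k) :=
  Setoid.comap (Sum.inl : Fin k → Fin k ⊕ Fin k) (p ⊔ idk k)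

/-- The permutation `(1,k+1)(2,k+2)⋯(k,2k)` of `{1,…,2k}`. -/
def tauPerm (k : ℕ) : Equiv.Perm (Fin (k + k)) :=
  (finSumFinEquiv.symm.trans (Equiv.sumComm (Fin k) (Fin k))).trans finSumFinEquiv

/-- The left part of a partition in `P_{k₁+k₂}`. -/
def leftPart {k₁ k₂ : ℕ} (p : Pk (k₁ + k₂)) : Pk k₁ :=
  Setoid.comap (Sum.map (Fin.castAdd k₂) (Fin.castAdd k₂)) p

/-- The right part of a partition in `P_{k₁+k₂}`. -/
def rightPart {k₁ k₂ : ℕ} (p : Pk (k₁ + k₂)) : Pk k₂ :=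
  Setoid.comap (Sum.map (Fin.natAdd k₁) (Fin.natAdd k₁)) p

/-- The `p`-moment `m_p(E_N) = Tr_N(E_N ᵗp)/N^{nc(p ⊔ id_k)}
`= ∑_{p'} (E_N)_{p'} N^{nc(p ⊔ p') - nc(p ⊔ id_k)}`. -/
def momentF {k : ℕ} (E : ℕ → Pk k → ℂ) (p : Pk k) (N : ℕ) : ℂ :=
  ∑ᶠ p' : Pk k, E N p' * (N : ℂ) ^ ((nc (p ⊔ p') : ℤ) - (nc (p ⊔ idk k) : ℤ))

/-- The `p`-cumulant `κ_p(E_N) = N^{nc p - nc (p ⊔ id_k)} (E_N)_p`. -/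
def cumulantF {k : ℕ} (E : ℕ → Pk k → ℂ) (p : Pk k) (N : ℕ) : ℂ :=
  (N : ℂ) ^ ((nc p : ℤ) - (nc (p ⊔ idk k) : ℤ)) * E N p

theorem map_of_le_surjective {p q : Setoid X} (h : p ≤ q) :
    Function.Surjective (Setoid.map_of_le h) :=
  Quotient.ind fun a => ⟨Quotient.mk p a, rfl⟩

theorem nc_le_nc_of_le [Finite X] {p q : Setoid X} (h : p ≤ q) : nc q ≤ nc p :=
  Nat.card_le_card_of_surjective _ (map_of_le_surjective h)

theorem eq_of_le_of_nc_le [Finite X] {p q : Setoid X} (h : p ≤ q) (hn : nc p ≤ nc q) :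
    p = q := by
  have hinj := ((map_of_le_surjective h).bijective_of_nat_card_le hn).1
  exact le_antisymm h fun a b hab => Quotient.exact (hinj (Quotient.sound hab))

theorem exists_rel_not_rel_of_le_of_ne {p q : Setoid X} (hle : p ≤ q) (hne : p ≠ q) :
    ∃ x y, q x y ∧ ¬ p x y := by
  by_contra! h
  exact hne (le_antisymm hle h)

def glueMap (u : Setoid X) (x y : X) (z : X) : Quotient u :=
  if u z y then Quotient.mk u x else Quotient.mk u z

/-- The partition obtained from `u` by gluing the blocks of `x` and `y`. -/
def glue (u : Setoid X) (x y : X) : Setoid X := Setoid.ker (glueMap u x y)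

section glue

variable {u : Setoid X} {x y : X}

theorem glue_iff {a b : X} : glue u x y a b ↔ glueMap u x y a = glueMap u x y b := Iff.rfl

variable (u x y)

theorem le_glue : u ≤ glue u x y := by
  intro a b h
  have hab : u a y ↔ u b y := ⟨u.trans' (u.symm' h), u.trans' h⟩
  rw [glue_iff, glueMap, glueMap, hab]
  split_ifs
  · rfl
  · exact Quotient.sound h

theorem glue_rel : glue u x y x y := by
  rw [glue_iff, glueMap, glueMap, if_pos (u.refl' y)]
  split_ifs <;> rfl

variable {u x y}

theorem glue_le {s : Setoid X} (hus : u ≤ s) (hs : s x y) : glue u x y ≤ s := by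
  intro a b h
  rw [glue_iff, glueMap, glueMap] at h
  split_ifs at h with ha hb hb
  · exact s.trans' (hus ha) (s.symm' (hus hb))
  · exact s.trans' (hus ha) (s.trans' (s.symm' hs) (hus (Quotient.exact h)))
  · exact s.trans' (hus (Quotient.exact h)) (s.trans' hs (s.symm' (hus hb)))
  · exact hus (Quotient.exact h)

theorem glue_sup (c : Setoid X) : glue u x y ⊔ c = glue (u ⊔ c) x y :=
  le_antisymm
    (sup_le (glue_le (le_sup_left.trans (le_glue _ x y)) (glue_rel _ x y))
      (le_sup_right.trans (le_glue _ x y)))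
    (glue_le (sup_le_sup_right (le_glue u x y) c)
      (le_sup_left (b := c) (glue_rel u x y)))

theorem nc_glue_eq_ncard_range : nc (glue u x y) = (Set.range (glueMap u x y)).ncard :=
  (Nat.card_congr (Setoid.quotientKerEquivRange _)).trans (Nat.card_coe_set_eq _)

theorem compl_singleton_subset_range_glueMap :
    {Quotient.mk u y}ᶜ ⊆ Set.range (glueMap u x y) := by
  refine Quotient.ind fun z hz => ⟨z, ?_⟩
  rw [glueMap, if_neg fun h => hz (Quotient.sound h)]

theorem range_glueMap_subset_compl_singleton (h : ¬ u x y) :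
    Set.range (glueMap u x y) ⊆ {Quotient.mk u y}ᶜ := by
  rintro _ ⟨z, rfl⟩ hz
  rw [glueMap] at hz
  split_ifs at hz with hzy
  · exact h (Quotient.exact hz)
  · exact hzy (Quotient.exact hz)

theorem nc_eq_ncard_compl_singleton_add_one [Finite X] (c : Quotient u) :
    nc u = ({c}ᶜ : Set (Quotient u)).ncard + 1 := by
  rw [← Set.ncard_singleton c, Set.ncard_compl_add_ncard]
  rfl

theorem nc_le_nc_glue_add_one [Finite X] : nc u ≤ nc (glue u x y) + 1 := by
  rw [nc_eq_ncard_compl_singleton_add_one (Quotient.mk u y), nc_glue_eq_ncard_range]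
  exact Nat.add_le_add_right (Set.ncard_le_ncard compl_singleton_subset_range_glueMap) 1

theorem nc_glue_add_one [Finite X] (h : ¬ u x y) : nc (glue u x y) + 1 = nc u := by
  rw [nc_eq_ncard_compl_singleton_add_one (Quotient.mk u y), nc_glue_eq_ncard_range,
    (range_glueMap_subset_compl_singleton h).antisymm compl_singleton_subset_range_glueMap]

end glue

theorem IsGluing.exists_eq_glue [Finite X] {a b : Setoid X} (h : IsGluing a b) :
    ∃ x y, b = glue a x y := by
  obtain ⟨x, y, hb, ha⟩ := exists_rel_not_rel_of_le_of_ne h.1 (by rintro rfl; have := h.2; omega)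
  refine ⟨x, y, (eq_of_le_of_nc_le (glue_le h.1 hb) ?_).symm⟩
  have := nc_glue_add_one ha
  have := h.2
  omega

theorem IsGluing.nc_sup_le_nc_sup_add_one [Finite X] {a b : Setoid X} (h : IsGluing a b)
    (c : Setoid X) : nc (a ⊔ c) ≤ nc (b ⊔ c) + 1 := by
  obtain ⟨x, y, rfl⟩ := h.exists_eq_glue
  rw [glue_sup]
  exact nc_le_nc_glue_add_one

theorem exists_walk_of_le [Finite X] {p q : Setoid X} (h : p ≤ q) :
    ∃ w : (glueGraph X).Walk p q, w.length = nc p - nc q := by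
  induction hn : nc p - nc q generalizing p with
  | zero =>
    obtain rfl := eq_of_le_of_nc_le h (by omega)
    exact ⟨.nil, rfl⟩
  | succ n ih =>
    obtain ⟨x, y, hq, hp⟩ := exists_rel_not_rel_of_le_of_ne h (by rintro rfl; omega)
    have hglue : IsGluing p (glue p x y) := ⟨le_glue p x y, nc_glue_add_one hp⟩
    have hle := glue_le h hq
    obtain ⟨w, hw⟩ := ih hle (by have := nc_le_nc_of_le hle; have := hglue.2; omega)
    have hadj : (glueGraph X).Adj p (glue p x y) := Or.inl hglue
    exact ⟨.cons hadj w, by simp [hw]⟩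

theorem nc_sub_two_nc_sup_le_of_adj [Finite X] {a b : Setoid X} (h : (glueGraph X).Adj a b)
    (c : Setoid X) :
    (nc a : ℤ) - 2 * nc (a ⊔ c) ≤ nc b - 2 * nc (b ⊔ c) + 1 := by
  rcases h with h | h
  · have := nc_le_nc_of_le (sup_le_sup_right h.1 c)
    have := h.2
    omega
  · have := h.nc_sup_le_nc_sup_add_one c
    have := h.2
    omega

theorem nc_sub_two_nc_sup_le_of_walk [Finite X] {a b : Setoid X} (w : (glueGraph X).Walk a b)
    (c : Setoid X) : (nc a : ℤ) - 2 * nc (a ⊔ c) ≤ nc b - 2 * nc (b ⊔ c) + w.length := by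
  induction w with
  | nil => simp
  | cons h w ih =>
    have := nc_sub_two_nc_sup_le_of_adj h c
    simp only [SimpleGraph.Walk.length_cons, Nat.cast_add, Nat.cast_one]
    omega

theorem nc_add_nc_sub_two_nc_sup_le_length [Finite X] {p q : Setoid X}
    (w : (glueGraph X).Walk p q) : (nc p : ℤ) + nc q - 2 * nc (p ⊔ q) ≤ w.length := by
  have := nc_sub_two_nc_sup_le_of_walk w q
  rw [sup_idem] at this
  omega

theorem glueGraph_reachable [Finite X] (p q : Setoid X) : (glueGraph X).Reachable p q := by
  obtain ⟨wp, -⟩ := exists_walk_of_le (le_sup_left : p ≤ p ⊔ q)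
  obtain ⟨wq, -⟩ := exists_walk_of_le (le_sup_right : q ≤ p ⊔ q)
  exact ⟨wp.append wq.reverse⟩

theorem glueGraph_dist [Finite X] (p q : Setoid X) :
    ((glueGraph X).dist p q : ℤ) = nc p + nc q - 2 * nc (p ⊔ q) := by
  obtain ⟨wp, hwp⟩ := exists_walk_of_le (le_sup_left : p ≤ p ⊔ q)
  obtain ⟨wq, hwq⟩ := exists_walk_of_le (le_sup_right : q ≤ p ⊔ q)
  have hupper := (glueGraph X).dist_le (wp.append wq.reverse)
  rw [SimpleGraph.Walk.length_append, SimpleGraph.Walk.length_reverse, hwp, hwq] at hupper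
  obtain ⟨w, hw⟩ := (glueGraph_reachable p q).exists_walk_length_eq_dist
  have hlower := nc_add_nc_sub_two_nc_sup_le_length w
  rw [hw] at hlower
  have := nc_le_nc_of_le (le_sup_left : p ≤ p ⊔ q)
  have := nc_le_nc_of_le (le_sup_right : q ≤ p ⊔ q)
  omega

/-- The Cayley graph on partitions of a finite set `X` (edges given by
gluing two blocks) is connected, the graph distance between `p` and `p'` equals
`nc p + nc p' - 2 nc (p ⊔ p')`, and the geodesic distance `d` is half the graph distance. -/
theorem statement0 {X : Type*} [Finite X] :
    (glueGraph X).Connected ∧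
    ∀ p p' : Setoid X,
      ((glueGraph X).dist p p' : ℤ) = (nc p : ℤ) + (nc p' : ℤ) - 2 * (nc (p ⊔ p') : ℤ) ∧
      pdist p p' = ((glueGraph X).dist p p' : ℚ) / 2 := by
  have : Nonempty (Setoid X) := ⟨⊥⟩
  refine ⟨⟨glueGraph_reachable⟩, fun p q => ⟨glueGraph_dist p q, ?_⟩⟩
  have hdist : ((glueGraph X).dist p q : ℚ) = nc p + nc q - 2 * nc (p ⊔ q) := by
    exact_mod_cast glueGraph_dist p q
  rw [pdist, hdist]
  ring

end PartitionPaper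
end
end

section
/- Let k be a positive integer and let D_k be the set of partitions in P_k that are coarser than id_k. The map φ sending p ∈ D_k to the partition of {1,…,k} whose blocks are the intersections of the blocks of p with {1,…,k} is a bijection from D_k onto the set of partitions of {1,…,k}, and it is an order isomorphism from (D_k, ≤) onto the partitions of {1,…,k} with the refinement order: for p, p' ∈ D_k, p' ≤ p if and only if φ(p') is finer than φ(p). -/
open Sum
open scoped Classical

noncomputable section

namespace PartitionPaper

variable {X : Type*}

section Aux

lemma nc_le_of_le {X : Type*} [Finite X] {p q : Setoid X} (h : p ≤ q) : nc q ≤ nc p := by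
  have hf : Function.Surjective
      (Quotient.map' (id : X → X) (fun a b hab => h hab) :
        Quotient p → Quotient q) := by
    intro y
    induction y using Quotient.inductionOn' with
    | h x => exact ⟨Quotient.mk'' x, rfl⟩
  exact Nat.card_le_card_of_surjective _ hf

lemma eq_of_le_of_nc_eq {X : Type*} [Finite X] {p q : Setoid X} (h : p ≤ q)
    (hn : nc q = nc p) : p = q := by
  set f : Quotient p → Quotient q := Quotient.map' (id : X → X) (fun a b hab => h hab) with hfdef
  have hf : Function.Surjective f := by
    intro y
    induction y using Quotient.inductionOn' with
    | h x => exact ⟨Quotient.mk'' x, rfl⟩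
  have hbij : Function.Bijective f :=
    (Nat.bijective_iff_surjective_and_card f).mpr ⟨hf, hn.symm⟩
  refine le_antisymm h ?_
  intro x y hxy
  have : f (Quotient.mk'' x) = f (Quotient.mk'' y) := by
    simpa [hfdef, Quotient.map'_mk''] using Quotient.sound' hxy
  exact Quotient.exact' (hbij.1 this)

lemma geoLE_iff_le {X : Type*} [Finite X] {b p p' : Setoid X}
    (hp : b ≤ p) (hp' : b ≤ p') : geoLE b p' p ↔ p' ≤ p := by
  have h1 : b ⊔ p = p := sup_eq_right.mpr hp
  have h2 : b ⊔ p' = p' := sup_eq_right.mpr hp'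
  have key : geoLE b p' p ↔ (nc (p' ⊔ p) : ℚ) = (nc p : ℚ) := by
    unfold geoLE pdist
    rw [h1, h2]
    constructor <;> intro h <;> [skip; skip] <;> linarith
  rw [key]
  constructor
  · intro h
    have hnc : nc (p' ⊔ p) = nc p := by exact_mod_cast h
    have := eq_of_le_of_nc_eq (le_sup_right : p ≤ p' ⊔ p) hnc
    rw [← sup_eq_right]
    exact this.symm
  · intro h
    rw [sup_eq_right.mpr h]

/-- The projection collapsing the two rows. -/
def projk (k : ℕ) : Fin k ⊕ Fin k → Fin k := Sum.elim id id

lemma comap_inl_comap_projk (k : ℕ) (π : Setoid (Fin k)) :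
    Setoid.comap (Sum.inl : Fin k → Fin k ⊕ Fin k) (Setoid.comap (projk k) π) = π :=
  Setoid.ext fun _ _ => Iff.rfl

lemma idk_le_comap_projk (k : ℕ) (π : Setoid (Fin k)) :
    idk k ≤ Setoid.comap (projk k) π := by
  intro x y hxy
  have : projk k x = projk k y := hxy
  show π (projk k x) (projk k y)
  rw [this]

lemma rel_inl_projk {k : ℕ} {p : Pk k} (hp : idk k ≤ p) (x : Fin k ⊕ Fin k) :
    p x (Sum.inl (projk k x)) := by
  cases x with
  | inl i => exact p.refl' _
  | inr i =>
      have : (idk k) (Sum.inl i) (Sum.inr i) := rfl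
      exact p.symm' (hp this)

lemma recon {k : ℕ} {p : Pk k} (hp : idk k ≤ p) :
    Setoid.comap (projk k) (Setoid.comap (Sum.inl : Fin k → Fin k ⊕ Fin k) p) = p := by
  apply Setoid.ext
  intro x y
  show p (Sum.inl (projk k x)) (Sum.inl (projk k y)) ↔ p x y
  constructor
  · intro h
    exact p.trans' (p.trans' (rel_inl_projk hp x) h) (p.symm' (rel_inl_projk hp y))
  · intro h
    exact p.trans' (p.trans' (p.symm' (rel_inl_projk hp x)) h) (rel_inl_projk hp y)

lemma comap_mono {X Y : Type*} (f : X → Y) {p q : Setoid Y} (h : p ≤ q) :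
    Setoid.comap f p ≤ Setoid.comap f q := fun _ _ hxy => h hxy

end Aux

/-- The restriction map `φ` (intersecting blocks with the top row)
is a bijection from `D_k = {p : id_k ≤ p}` onto the partitions of `{1,…,k}`, and an
order isomorphism from `(D_k, ≤)` (geodesic order) onto the refinement order. -/
theorem statement8 (k : ℕ) (hk : 0 < k) :
    Set.BijOn (fun p : Pk k => Setoid.comap (Sum.inl : Fin k → Fin k ⊕ Fin k) p)
      {p : Pk k | idk k ≤ p} Set.univ ∧
    ∀ p p' : Pk k, idk k ≤ p → idk k ≤ p' →
      (geoLE (idk k) p' p ↔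
        Setoid.comap (Sum.inl : Fin k → Fin k ⊕ Fin k) p' ≤
          Setoid.comap (Sum.inl : Fin k → Fin k ⊕ Fin k) p) := by
  constructor
  · refine ⟨fun _ _ => trivial, ?_, ?_⟩
    · intro p hp p' hp' h
      have := congrArg (Setoid.comap (projk k)) h
      rwa [recon hp, recon hp'] at this
    · intro π _
      exact ⟨Setoid.comap (projk k) π, idk_le_comap_projk k π, comap_inl_comap_projk k π⟩
  · intro p p' hp hp'
    rw [geoLE_iff_le hp hp']
    constructor
    · exact comap_mono _
    · intro h
      have := comap_mono (projk k) h
      rwa [recon hp, recon hp'] at this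

end PartitionPaper
end
end
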